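/- arXiv:1605.02440 — 2 statements merged into one kernel-verified Lean document; each statement's English description precedes it below -/
import Mathlib

section
/- Let χ be a primitive Dirichlet character modulo q and let a, c be coprime positive integers. Then (1/(cq)) Σ_{ℓ=1}^{cq} χ(ℓ) e(ℓa/c) equals 0 if c does not divide q, and equals (1/q) χ̄(aq/c) τ(χ) if c divides q, where τ(χ) = Σ_{ℓ=1}^{q} χ(ℓ) e(ℓ/q) is the Gauss sum. -/
open Complex

/-- `e(x) = exp(2πix)`. -/
noncomputable def e (x : ℝ) : ℂ := Complex.exp (2 * Real.pi * Complex.I * x)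

/-- The Gauss sum `τ(χ) = ∑_{ℓ=1}^{q} χ(ℓ) e(ℓ/q)`. -/
noncomputable def gaussSum' (q : ℕ) (χ : DirichletCharacter ℂ q) : ℂ :=
  ∑ ℓ ∈ Finset.Icc 1 q, χ (ℓ : ZMod q) * e ((ℓ : ℝ) / (q : ℝ))

/-!
Writing `ℓ = q t + m` with `t < c`, `m < q`, the factor `χ(ℓ)` only sees `m`, and `e(ℓa/c)`
splits as `e(aqt/c) e(am/c)`, so the sum factors as `(∑_{t<c} e(aqt/c)) (∑_{m<q} χ(m) e(am/c))`.
The first factor is `c` or `0` according as `c ∣ aq`, i.e. (as `gcd(a, c) = 1`) as `c ∣ q`.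
If `q = ck`, then `e(am/c) = e(akm/q)`, and the second factor is the Gauss sum of `χ` against the
twisted character `m ↦ e(akm/q)`, which for primitive `χ` is `χ̄(ak) τ(χ)`.
-/

open Finset ZMod AddChar

theorem Finset.sum_Icc_one_eq_sum_range {M : Type*} [AddCommMonoid M] {f : ℕ → M} {n : ℕ}
    (h : f n = f 0) : ∑ ℓ ∈ Icc 1 n, f ℓ = ∑ ℓ ∈ range n, f ℓ := by
  cases n with
  | zero => simp
  | succ m =>
    rw [sum_Icc_succ_top (by omega), h, range_eq_Ico, sum_eq_sum_Ico_succ_bot (by omega),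
      zero_add, Ico_add_one_right_eq_Icc, add_comm]

theorem Finset.sum_range_mul_eq_sum_sum {M : Type*} [AddCommMonoid M] (f : ℕ → M) (c q : ℕ) :
    ∑ ℓ ∈ range (c * q), f ℓ = ∑ t ∈ range c, ∑ m ∈ range q, f (q * t + m) := by
  induction c with
  | zero => simp
  | succ c ih =>
    rw [sum_range_succ, ← ih, Nat.succ_mul,
      ← sum_range_add_sum_Ico f (Nat.le_add_right (c * q) q), sum_Ico_eq_sum_range]
    simp [mul_comm]

namespace ZMod

variable {M : Type*} [AddCommMonoid M] (n : ℕ) [NeZero n]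

theorem sum_range_natCast (H : ZMod n → M) : ∑ ℓ ∈ range n, H ℓ = ∑ x : ZMod n, H x := by
  refine sum_nbij' (fun ℓ => (ℓ : ZMod n)) val (fun _ _ => mem_univ _)
    (fun x _ => mem_range.mpr x.val_lt) (fun ℓ hℓ => val_cast_of_lt (mem_range.mp hℓ))
    (fun x _ => natCast_zmod_val x) (fun _ _ => rfl)

theorem sum_Icc_one_natCast (H : ZMod n → M) : ∑ ℓ ∈ Icc 1 n, H ℓ = ∑ x : ZMod n, H x := by
  rw [sum_Icc_one_eq_sum_range (by simp), sum_range_natCast]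

end ZMod

theorem e_natCast_div (j n : ℕ) [NeZero n] : e (j / n) = stdAddChar (j : ZMod n) := by
  rw [← Int.cast_natCast (R := ZMod n), stdAddChar_coe, e]
  push_cast
  ring_nf

theorem ZMod.stdAddChar_natCast_eq_stdAddChar_mul {c k : ℕ} [NeZero c] [NeZero (c * k)] (j : ℕ) :
    stdAddChar (j : ZMod c) = stdAddChar ((k * j : ℕ) : ZMod (c * k)) := by
  have hk : (k : ℝ) ≠ 0 := by exact_mod_cast right_ne_zero_of_mul (NeZero.ne (c * k))
  rw [← e_natCast_div, ← e_natCast_div, Nat.cast_mul, Nat.cast_mul, mul_comm (c : ℝ),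
    mul_div_mul_left _ _ hk]

theorem ZMod.sum_range_stdAddChar_mul (c : ℕ) [NeZero c] (k : ℕ) :
    ∑ t ∈ range c, stdAddChar ((k : ZMod c) * (t : ZMod c)) = if c ∣ k then (c : ℂ) else 0 := by
  rw [sum_range_natCast c fun x => stdAddChar ((k : ZMod c) * x)]
  simp_rw [mul_comm (k : ZMod c)]
  rw [sum_mulShift _ (isPrimitive_stdAddChar c)]
  simp only [natCast_eq_zero_iff, card, apply_ite (Nat.cast : ℕ → ℂ), Nat.cast_zero]

theorem sum_range_mul_apply_mul_addChar {R : Type*} [CommSemiring R] {c q : ℕ}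
    (f : ZMod q → R) (ψ : AddChar (ZMod c) R) :
    ∑ ℓ ∈ range (c * q), f ℓ * ψ ℓ
      = (∑ t ∈ range c, ψ ((q : ZMod c) * (t : ZMod c))) * ∑ m ∈ range q, f m * ψ m := by
  rw [sum_range_mul_eq_sum_sum, sum_mul_sum]
  refine sum_congr rfl fun t _ => sum_congr rfl fun m _ => ?_
  push_cast
  rw [natCast_self, zero_mul, zero_add, map_add_eq_mul]
  ring

theorem DirichletCharacter.sum_range_mul_stdAddChar_of_isPrimitive {c k : ℕ} [NeZero c]
    [NeZero (c * k)] {χ : DirichletCharacter ℂ (c * k)} (hχ : χ.IsPrimitive) (a : ℕ) :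
    ∑ m ∈ range (c * k), χ m * stdAddChar.mulShift (a : ZMod c) m
      = χ⁻¹ ((a * k : ℕ) : ZMod (c * k)) * gaussSum χ stdAddChar := by
  rw [← gaussSum_mulShift_of_isPrimitive _ hχ, gaussSum, ← sum_range_natCast]
  refine sum_congr rfl fun m _ => ?_
  rw [mulShift_apply, mulShift_apply, ← Nat.cast_mul, ← Nat.cast_mul,
    stdAddChar_natCast_eq_stdAddChar_mul (k := k)]
  push_cast
  ring_nf

theorem gaussSum'_eq_gaussSum (q : ℕ) [NeZero q] (χ : DirichletCharacter ℂ q) :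
    gaussSum' q χ = gaussSum χ stdAddChar := by
  simp only [gaussSum', e_natCast_div]
  exact sum_Icc_one_natCast q fun x => χ x * stdAddChar x

theorem character_exponential_average_general (q : ℕ) [NeZero q] (χ : DirichletCharacter ℂ q)
    (hχ : χ.IsPrimitive) (a c : ℕ) (hc : 0 < c) (hac : Nat.gcd a c = 1) :
    (1 / ((c : ℂ) * (q : ℂ))) * ∑ ℓ ∈ Finset.Icc 1 (c * q),
        χ (ℓ : ZMod q) * e ((ℓ : ℝ) * (a : ℝ) / (c : ℝ)) =
      if c ∣ q then (1 / (q : ℂ)) * (starRingEnd ℂ) (χ ((a * (q / c) : ℕ) : ZMod q)) *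
        gaussSum' q χ
      else 0 := by
  have : NeZero c := ⟨hc.ne'⟩
  have hsum : ∑ ℓ ∈ Icc 1 (c * q), χ (ℓ : ZMod q) * e ((ℓ : ℝ) * a / c)
      = (∑ t ∈ range c, stdAddChar (((a * q : ℕ) : ZMod c) * (t : ZMod c)))
        * ∑ m ∈ range q, χ m * stdAddChar.mulShift (a : ZMod c) m := by
    simp only [Nat.cast_mul, mul_assoc, ← mulShift_apply (ψ := stdAddChar)]
    rw [← sum_range_mul_apply_mul_addChar, ← sum_Icc_one_eq_sum_range (by simp)]
    refine sum_congr rfl fun ℓ _ => ?_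
    rw [show (ℓ : ℝ) * a / c = ((a * ℓ : ℕ) : ℝ) / c by push_cast; ring, e_natCast_div,
      mulShift_apply, Nat.cast_mul]
  have hdvd : c ∣ a * q ↔ c ∣ q := (Nat.coprime_comm.mp hac).dvd_mul_left
  simp only [hsum, sum_range_stdAddChar_mul, hdvd]
  split_ifs with hcq
  · obtain ⟨k, rfl⟩ := hcq
    rw [Nat.mul_div_cancel_left k hc, gaussSum'_eq_gaussSum,
      DirichletCharacter.sum_range_mul_stdAddChar_of_isPrimitive hχ, starRingEnd_apply,
      MulChar.star_apply']
    have : (c : ℂ) ≠ 0 := mod_cast hc.ne'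
    field_simp
  · simp

/-- for primitive χ mod q and coprime positive a, c, the average
`(1/(cq)) ∑_{ℓ=1}^{cq} χ(ℓ) e(ℓa/c)` is `0` unless `c ∣ q`, in which case it equals
`(1/q) χ̄(aq/c) τ(χ)`. -/
theorem character_exponential_average (q : ℕ) [NeZero q] (χ : DirichletCharacter ℂ q)
    (hχ : χ.IsPrimitive) (a c : ℕ) (ha : 0 < a) (hc : 0 < c) (hac : Nat.gcd a c = 1) :
    (1 / ((c : ℂ) * (q : ℂ))) * ∑ ℓ ∈ Finset.Icc 1 (c * q),
        χ (ℓ : ZMod q) * e ((ℓ : ℝ) * (a : ℝ) / (c : ℝ)) =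
      if c ∣ q then (1 / (q : ℂ)) * (starRingEnd ℂ) (χ ((a * (q / c) : ℕ) : ZMod q)) *
        gaussSum' q χ
      else 0 :=
  character_exponential_average_general q χ hχ a c hc hac
end

section
/- Let χ be a primitive Dirichlet character modulo q and let a, c be coprime positive integers. The function F*(s,χ,a/c), defined for Re(s)>1 by Σ_{n≥1} χ(n) e(na/c) n^{-s}, extends to a meromorphic function on ℂ which is entire if c ≠ q, and if c = q has a unique simple pole at s = 1 with residue χ̄(a)τ(χ)/q. -/
open Complex

/-!
The coefficients `n ↦ χ(n) e(na/c)` are periodic modulo any common multiple `N` of `q` and `c`,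
so `F*(s, χ, a/c)` is the L-function of a function `Φ` on `ZMod N`: a finite combination of
Hurwitz zeta functions, holomorphic except for at most a simple pole at `s = 1` whose residue is
the mean value of `Φ`. Shifting the summation variable by `q` multiplies `∑ Φ` by `e(qa/c)`, so
the sum vanishes unless `c ∣ q`. If `c ∣ q` we may take `N = q`, and `∑ Φ` is the Gauss sum of
`χ` against the additive character `x ↦ e(a (q/c) x / q)`; by primitivity it equals
`χ̄(a q/c) τ(χ)`, which vanishes unless `q / c = 1`.
-/

open Finset

namespace ZMod

lemma not_isUnit_natCast_mul_of_dvd {N m d : ℕ} (hd : d ∣ N) (hd1 : d ≠ 1) :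
    ¬IsUnit ((m * d : ℕ) : ZMod N) := by
  rw [isUnit_iff_coprime]
  exact fun h ↦ hd1 (h.coprime_mul_left.eq_one_of_dvd hd)

variable {N : ℕ} [NeZero N]

lemma stdAddChar_natCast_eq_e (k : ℕ) : stdAddChar (k : ZMod N) = e (k / N) := by
  rw [stdAddChar_apply, toCircle_natCast, e]
  push_cast
  ring_nf

lemma stdAddChar_castHom {c : ℕ} [NeZero c] (h : c ∣ N) (j : ZMod N) :
    stdAddChar (castHom h (ZMod c) j) = stdAddChar (((N / c : ℕ) : ZMod N) * j) := by
  obtain ⟨k, rfl⟩ := natCast_zmod_surjective j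
  rw [map_natCast, ← Nat.cast_mul, stdAddChar_natCast_eq_e, stdAddChar_natCast_eq_e]
  obtain ⟨d, rfl⟩ := h
  have hc : (c : ℝ) ≠ 0 := Nat.cast_ne_zero.mpr (NeZero.ne c)
  have hd : (d : ℝ) ≠ 0 := by
    exact_mod_cast right_ne_zero_of_mul (NeZero.ne (c * d))
  rw [Nat.mul_div_cancel_left d (NeZero.pos c)]
  push_cast
  field_simp

lemma sum_Icc_one_eq_sum {M : Type*} [AddCommMonoid M] (f : ZMod N → M) :
    ∑ ℓ ∈ Icc 1 N, f ℓ = ∑ j, f j := by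
  refine sum_nbij' (fun ℓ ↦ (ℓ : ZMod N)) (fun j ↦ (j - 1).val + 1) (by simp) ?_ ?_ ?_ (by simp)
  · intro j _
    simpa using Nat.succ_le_of_lt (val_lt (j - 1))
  · intro ℓ hℓ
    obtain ⟨h1, h2⟩ := mem_Icc.mp hℓ
    rw [← Nat.cast_one, ← Nat.cast_sub h1, val_natCast, Nat.mod_eq_of_lt (by omega)]
    omega
  · intro j _
    simp

lemma LFunction_eq_tsum_pnat (Φ : ZMod N → ℂ) {s : ℂ} (hs : 1 < s.re) :
    LFunction Φ s = ∑' n : ℕ+, Φ n * (n : ℂ) ^ (-s) := by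
  rw [LFunction_eq_LSeries Φ hs, LSeries, ← tsum_pnat_eq_tsum_of_eq_zero (LSeries.term_zero _ _)]
  refine tsum_congr fun n ↦ ?_
  rw [LSeries.term_of_ne_zero n.ne_zero, cpow_neg, div_eq_mul_inv]

end ZMod

lemma gaussSum_stdAddChar_eq_gaussSum' (q : ℕ) [NeZero q] (χ : DirichletCharacter ℂ q) :
    gaussSum χ ZMod.stdAddChar = gaussSum' q χ := by
  rw [gaussSum', gaussSum, ← ZMod.sum_Icc_one_eq_sum]
  refine sum_congr rfl fun ℓ _ ↦ ?_
  rw [ZMod.stdAddChar_natCast_eq_e]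

noncomputable def twistedCoeff {q c N : ℕ} [NeZero c] (χ : DirichletCharacter ℂ q) (a : ℕ) (hq : q ∣ N)
    (hc : c ∣ N) (j : ZMod N) : ℂ :=
  χ (ZMod.castHom hq (ZMod q) j) * ZMod.stdAddChar ((a : ZMod c) * ZMod.castHom hc (ZMod c) j)

section twistedCoeff

variable {q c N : ℕ} [NeZero c] (χ : DirichletCharacter ℂ q) (a : ℕ)

lemma twistedCoeff_natCast (hq : q ∣ N) (hc : c ∣ N) (n : ℕ) :
    twistedCoeff χ a hq hc n = χ n * e (n * a / c) := by
  simp only [twistedCoeff, map_natCast]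
  rw [← Nat.cast_mul, ZMod.stdAddChar_natCast_eq_e]
  push_cast
  ring_nf

lemma sum_twistedCoeff_eq_zero [NeZero N] (hq : q ∣ N) (hc : c ∣ N) (h : ¬c ∣ q * a) :
    ∑ j, twistedCoeff χ a hq hc j = 0 := by
  set ψq := ZMod.stdAddChar ((q * a : ℕ) : ZMod c)
  have hshift (j : ZMod N) : twistedCoeff χ a hq hc (j + q) = ψq * twistedCoeff χ a hq hc j := by
    simp only [twistedCoeff, ψq, map_add, map_natCast, ZMod.natCast_self, add_zero, mul_add,
      AddChar.map_add_eq_mul]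
    push_cast
    ring_nf
  have hψq : ψq ≠ 1 := by
    rwa [Ne, ← AddChar.map_zero_eq_one (ZMod.stdAddChar (N := c)), ZMod.injective_stdAddChar.eq_iff,
      ZMod.natCast_eq_zero_iff]
  have hfixed : ∑ j, twistedCoeff χ a hq hc j = ψq * ∑ j, twistedCoeff χ a hq hc j := by
    calc ∑ j, twistedCoeff χ a hq hc j
        = ∑ j, twistedCoeff χ a hq hc (j + q) := (Equiv.sum_comp (Equiv.addRight _) _).symm
      _ = ψq * ∑ j, twistedCoeff χ a hq hc j := by simp only [hshift, mul_sum]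
  have := mul_eq_zero.mp (show (1 - ψq) * ∑ j, twistedCoeff χ a hq hc j = 0 by
    linear_combination hfixed)
  exact this.resolve_left (sub_ne_zero.mpr hψq.symm)

lemma sum_twistedCoeff_of_dvd [NeZero q] (hχ : χ.IsPrimitive) (h : c ∣ q) :
    ∑ j, twistedCoeff χ a dvd_rfl h j =
      χ⁻¹ ((a * (q / c) : ℕ) : ZMod q) * gaussSum χ ZMod.stdAddChar := by
  rw [← gaussSum_mulShift_of_isPrimitive _ hχ, gaussSum]
  refine sum_congr rfl fun j _ ↦ ?_
  rw [twistedCoeff, ZMod.castHom_self, RingHom.id_apply, AddChar.mulShift_apply, ← map_natCast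
    (ZMod.castHom h (ZMod c)) a, ← map_mul, ZMod.stdAddChar_castHom]
  push_cast
  ring_nf

end twistedCoeff

theorem exists_zmod_coeff_mean_eq {q : ℕ} [NeZero q] {χ : DirichletCharacter ℂ q}
    (hχ : χ.IsPrimitive) {a c : ℕ} (hc : 0 < c) (hac : a.Coprime c) :
    ∃ N : ℕ, ∃ _ : NeZero N, ∃ Φ : ZMod N → ℂ, (∀ n : ℕ, Φ n = χ n * e (n * a / c)) ∧
      ∑ j, Φ j / N =
        if c = q then (starRingEnd ℂ) (χ (a : ZMod q)) * gaussSum' q χ / (q : ℂ) else 0 := by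
  have : NeZero c := ⟨hc.ne'⟩
  by_cases hcq : c ∣ q
  · refine ⟨q, inferInstance, twistedCoeff χ a dvd_rfl hcq, twistedCoeff_natCast χ a _ _, ?_⟩
    rw [← sum_div, sum_twistedCoeff_of_dvd χ a hχ hcq]
    split_ifs with h
    · subst h
      rw [Nat.div_self hc, mul_one, ← MulChar.star_apply', gaussSum_stdAddChar_eq_gaussSum']
      rfl
    · have hd : c * (q / c) = q := Nat.mul_div_cancel' hcq
      have hd1 : q / c ≠ 1 := fun h1 ↦ h (by rw [← hd, h1, mul_one])
      rw [MulChar.map_nonunit _ (ZMod.not_isUnit_natCast_mul_of_dvd (Nat.div_dvd_of_dvd hcq) hd1),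
        zero_mul, zero_div]
  · have : NeZero (q * c) := ⟨mul_ne_zero (NeZero.ne q) hc.ne'⟩
    refine ⟨q * c, inferInstance, twistedCoeff χ a (dvd_mul_right q c) (dvd_mul_left c q),
      twistedCoeff_natCast χ a _ _, ?_⟩
    have hqa : ¬c ∣ q * a := fun h ↦ hcq (hac.symm.dvd_of_dvd_mul_right h)
    rw [← sum_div, sum_twistedCoeff_eq_zero χ a _ _ hqa, zero_div,
      if_neg fun h : c = q ↦ hcq (h ▸ dvd_rfl)]

theorem twisted_periodic_zeta_continuation_general (q : ℕ) [NeZero q] (χ : DirichletCharacter ℂ q)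
    (hχ : χ.IsPrimitive) (a c : ℕ) (hc : 0 < c) (hac : Nat.gcd a c = 1) :
    ∃ F : ℂ → ℂ,
      (∀ s : ℂ, 1 < s.re →
        F s = ∑' n : ℕ+, χ ((n : ℕ) : ZMod q) * e ((n : ℝ) * (a : ℝ) / (c : ℝ)) *
          (n : ℂ) ^ (-s)) ∧
      (c ≠ q → Differentiable ℂ F) ∧
      (c = q → DifferentiableOn ℂ F {(1 : ℂ)}ᶜ ∧
        Filter.Tendsto (fun s : ℂ => (s - 1) * F s) (nhdsWithin 1 {(1 : ℂ)}ᶜ)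
          (nhds ((starRingEnd ℂ) (χ (a : ZMod q)) * gaussSum' q χ / (q : ℂ)))) := by
  obtain ⟨N, _, Φ, hΦ, hmean⟩ := exists_zmod_coeff_mean_eq hχ hc hac
  refine ⟨ZMod.LFunction Φ, fun s hs ↦ ?_, fun hcq ↦ ?_, fun hcq ↦ ⟨?_, ?_⟩⟩
  · simp only [ZMod.LFunction_eq_tsum_pnat Φ hs, hΦ]
  · rw [if_neg hcq, ← sum_div, div_eq_zero_iff, Nat.cast_eq_zero] at hmean
    exact ZMod.differentiable_LFunction_of_sum_zero (hmean.resolve_right (NeZero.ne N))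
  · exact fun s hs ↦ (ZMod.differentiableAt_LFunction Φ s (Or.inl hs)).differentiableWithinAt
  · simpa only [hmean, if_pos hcq] using ZMod.LFunction_residue_one Φ

/-- the twisted periodic zeta function `F*(s,χ,a/c)` extends to a meromorphic
function on ℂ, entire if `c ≠ q`, and with a unique simple pole at `s = 1` of residue
`χ̄(a) τ(χ) / q` if `c = q`. -/
theorem twisted_periodic_zeta_continuation (q : ℕ) [NeZero q] (χ : DirichletCharacter ℂ q)
    (hχ : χ.IsPrimitive) (a c : ℕ) (ha : 0 < a) (hc : 0 < c) (hac : Nat.gcd a c = 1) :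
    ∃ F : ℂ → ℂ,
      (∀ s : ℂ, 1 < s.re →
        F s = ∑' n : ℕ+, χ ((n : ℕ) : ZMod q) * e ((n : ℝ) * (a : ℝ) / (c : ℝ)) *
          (n : ℂ) ^ (-s)) ∧
      (c ≠ q → Differentiable ℂ F) ∧
      (c = q → DifferentiableOn ℂ F {(1 : ℂ)}ᶜ ∧
        Filter.Tendsto (fun s : ℂ => (s - 1) * F s) (nhdsWithin 1 {(1 : ℂ)}ᶜ)
          (nhds ((starRingEnd ℂ) (χ (a : ZMod q)) * gaussSum' q χ / (q : ℂ)))) :=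
  twisted_periodic_zeta_continuation_general q χ hχ a c hc hac
end
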